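/- With g₀(ζ) := ∫_ζ^1 √(t^{−2} − 1) dt − (1−ζ²)^{3/2}/(2−ζ²): g₀(ζ) → +∞ as ζ → 0⁺, g₀(√(2−√2)) < 0, and consequently there exists a unique ζ₀ ∈ (0, √(2−√2)) with g₀(ζ₀) = 0; moreover g₀(ζ) < 0 for all ζ ∈ (ζ₀, 1). -/

import Mathlib

open Filter

/-- The leading-order criticality function
`g₀(ζ) = ∫_ζ^1 √(t^{−2}−1) dt − (1−ζ²)^{3/2}/(2−ζ²)`. -/
noncomputable def g0 (ζ : ℝ) : ℝ :=
  (∫ t in ζ..(1 : ℝ), Real.sqrt (1 / t ^ 2 - 1)) - (1 - ζ ^ 2) ^ ((3 : ℝ) / 2) / (2 - ζ ^ 2)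

/-!
On `(0, 1]` the derivative of `g₀` is
`g₀'(ζ) = 2 √(1 - ζ²) (2 - (2 - ζ²)²) / (ζ (2 - ζ²)²)`, which is negative for `ζ < √(2 - √2)`
and positive for `ζ > √(2 - √2)`. Since `g₀(1) = 0`, `g₀` is negative on `[√(2 - √2), 1)`.
Near `0` the integrand is at least `1 / (2t)`, so the integral grows like `-log ζ / 2` while the
subtracted term stays below `1`; hence `g₀ → +∞`, and the intermediate value theorem together with
strict monotonicity on `(0, √(2 - √2)]` gives the unique zero `ζ₀`.
-/

open Real Set Topology intervalIntegral

lemma sqrt_one_div_sq_sub_one {t : ℝ} (ht : 0 < t) : √(1 / t ^ 2 - 1) = √(1 - t ^ 2) / t := by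
  rw [show 1 / t ^ 2 - 1 = (1 - t ^ 2) / t ^ 2 by field_simp, sqrt_div' _ (by positivity),
    sqrt_sq ht.le]

lemma continuousOn_sqrt_one_div_sq_sub_one :
    ContinuousOn (fun t : ℝ => √(1 / t ^ 2 - 1)) {0}ᶜ :=
  ((continuousOn_const.div (continuousOn_pow 2) fun _ ht => pow_ne_zero 2 ht).sub
    continuousOn_const).sqrt

lemma intervalIntegrable_sqrt_one_div_sq_sub_one {a b : ℝ} (ha : 0 < a) (hb : 0 < b) :
    IntervalIntegrable (fun t : ℝ => √(1 / t ^ 2 - 1)) MeasureTheory.volume a b :=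
  (continuousOn_sqrt_one_div_sq_sub_one.mono fun _ ht =>
    (lt_min ha hb |>.trans_le ht.1).ne').intervalIntegrable

lemma hasDerivAt_integral_sqrt_one_div_sq_sub_one {ζ : ℝ} (hζ : 0 < ζ) :
    HasDerivAt (fun u => ∫ t in u..(1 : ℝ), √(1 / t ^ 2 - 1)) (-√(1 / ζ ^ 2 - 1)) ζ :=
  integral_hasDerivAt_left (intervalIntegrable_sqrt_one_div_sq_sub_one hζ one_pos)
    (continuousOn_sqrt_one_div_sq_sub_one.stronglyMeasurableAtFilter isOpen_compl_singleton ζ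
      hζ.ne')
    (continuousOn_sqrt_one_div_sq_sub_one.continuousAt (isOpen_compl_singleton.mem_nhds hζ.ne'))

lemma rpow_three_div_two {x : ℝ} (hx : 0 ≤ x) : x ^ ((3 : ℝ) / 2) = x * √x := by
  rw [sqrt_eq_rpow, show (3 : ℝ) / 2 = 1 + 1 / 2 by norm_num, rpow_add' hx (by norm_num),
    rpow_one]

noncomputable def g0Deriv (ζ : ℝ) : ℝ :=
  2 * √(1 - ζ ^ 2) * (2 - (2 - ζ ^ 2) ^ 2) / (ζ * (2 - ζ ^ 2) ^ 2)

lemma hasDerivAt_g0 {ζ : ℝ} (h0 : 0 < ζ) (h1 : ζ ≤ 1) : HasDerivAt g0 (g0Deriv ζ) ζ := by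
  have hnum : HasDerivAt (fun ζ : ℝ => (1 - ζ ^ 2) ^ ((3 : ℝ) / 2))
      (-(2 * ζ) * (3 / 2) * (1 - ζ ^ 2) ^ ((3 : ℝ) / 2 - 1)) ζ := by
    simpa using ((hasDerivAt_pow 2 ζ).const_sub 1).rpow_const (p := 3 / 2) (Or.inr (by norm_num))
  have hden : HasDerivAt (fun ζ : ℝ => 2 - ζ ^ 2) (-(2 * ζ)) ζ := by
    simpa using (hasDerivAt_pow 2 ζ).const_sub 2
  have hden0 : 2 - ζ ^ 2 ≠ 0 := by nlinarith
  refine ((hasDerivAt_integral_sqrt_one_div_sq_sub_one h0).sub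
    (hnum.div hden hden0)).congr_deriv ?_
  have hx : 0 ≤ 1 - ζ ^ 2 := by nlinarith
  rw [sqrt_one_div_sq_sub_one h0, rpow_three_div_two hx, show (3 : ℝ) / 2 - 1 = 1 / 2 by norm_num,
    ← sqrt_eq_rpow, g0Deriv]
  field_simp
  ring

lemma continuousOn_g0 : ContinuousOn g0 (Ioc 0 1) := fun _ hζ =>
  (hasDerivAt_g0 hζ.1 hζ.2).continuousAt.continuousWithinAt

lemma g0_one : g0 1 = 0 := by
  simp [g0, zero_rpow (by norm_num : (3 : ℝ) / 2 ≠ 0)]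

lemma sqrt_two_sub_sqrt_two_pos : 0 < √(2 - √2) :=
  sqrt_pos.2 (by nlinarith [sqrt_lt' two_pos |>.2 (by norm_num : (2 : ℝ) < 2 ^ 2)])

lemma sqrt_two_sub_sqrt_two_lt_one : √(2 - √2) < 1 :=
  (sqrt_lt' one_pos).2 (by linarith [one_lt_sqrt_two])

lemma g0Deriv_neg {ζ : ℝ} (h0 : 0 < ζ) (h : ζ < √(2 - √2)) : g0Deriv ζ < 0 := by
  have hζ2 : ζ ^ 2 < 2 - √2 := (lt_sqrt h0.le).1 h
  have hζ1 : ζ < 1 := h.trans sqrt_two_sub_sqrt_two_lt_one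
  have hsq : 2 < (2 - ζ ^ 2) ^ 2 := (sqrt_lt' (by nlinarith)).1 (by linarith)
  have hs : 0 < √(1 - ζ ^ 2) := sqrt_pos.2 (by nlinarith)
  exact div_neg_of_neg_of_pos (mul_neg_of_pos_of_neg (mul_pos two_pos hs) (by linarith))
    (by positivity)

lemma g0Deriv_pos {ζ : ℝ} (h : √(2 - √2) < ζ) (h1 : ζ < 1) : 0 < g0Deriv ζ := by
  have h0 : 0 < ζ := sqrt_two_sub_sqrt_two_pos.trans h
  have hζ2 : 2 - √2 < ζ ^ 2 := (sqrt_lt' h0).1 h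
  have hsq : (2 - ζ ^ 2) ^ 2 < 2 := (lt_sqrt (by nlinarith)).1 (by linarith)
  have hs : 0 < √(1 - ζ ^ 2) := sqrt_pos.2 (by nlinarith)
  have hd : 0 < 2 - ζ ^ 2 := by nlinarith
  exact div_pos (mul_pos (mul_pos two_pos hs) (sub_pos.2 hsq)) (mul_pos h0 (pow_pos hd 2))

lemma strictAntiOn_g0 : StrictAntiOn g0 (Ioc 0 √(2 - √2)) := by
  refine strictAntiOn_of_hasDerivWithinAt_neg (f' := g0Deriv) (convex_Ioc _ _)
    (continuousOn_g0.mono (Ioc_subset_Ioc_right sqrt_two_sub_sqrt_two_lt_one.le))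
    (fun ζ hζ => ?_) (fun ζ hζ => ?_) <;> rw [interior_Ioc] at hζ
  · exact (hasDerivAt_g0 hζ.1 (hζ.2.trans sqrt_two_sub_sqrt_two_lt_one).le).hasDerivWithinAt
  · exact g0Deriv_neg hζ.1 hζ.2

lemma strictMonoOn_g0 : StrictMonoOn g0 (Icc √(2 - √2) 1) := by
  refine strictMonoOn_of_hasDerivWithinAt_pos (f' := g0Deriv) (convex_Icc _ _)
    (continuousOn_g0.mono (Icc_subset_Ioc_iff sqrt_two_sub_sqrt_two_lt_one.le |>.2
      ⟨sqrt_two_sub_sqrt_two_pos, le_rfl⟩))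
    (fun ζ hζ => ?_) (fun ζ hζ => ?_) <;> rw [interior_Icc] at hζ
  · exact (hasDerivAt_g0 (sqrt_two_sub_sqrt_two_pos.trans hζ.1) hζ.2.le).hasDerivWithinAt
  · exact g0Deriv_pos hζ.1 hζ.2

lemma g0_sqrt_two_sub_sqrt_two_neg : g0 √(2 - √2) < 0 :=
  g0_one ▸ strictMonoOn_g0 ⟨le_rfl, sqrt_two_sub_sqrt_two_lt_one.le⟩
    ⟨sqrt_two_sub_sqrt_two_lt_one.le, le_rfl⟩ sqrt_two_sub_sqrt_two_lt_one

lemma inv_two_mul_le_sqrt_one_div_sq_sub_one {t : ℝ} (h0 : 0 < t) (h : t ≤ 1 / 2) :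
    (2 * t)⁻¹ ≤ √(1 / t ^ 2 - 1) := by
  rw [le_sqrt' (by positivity), inv_pow, mul_pow, le_sub_iff_add_le, ← le_sub_iff_add_le']
  field_simp
  nlinarith

lemma log_div_two_le_integral_sqrt_one_div_sq_sub_one {ζ : ℝ} (h0 : 0 < ζ) (h : ζ ≤ 1 / 2) :
    log (ζ⁻¹ / 2) / 2 ≤ ∫ t in ζ..(1 : ℝ), √(1 / t ^ 2 - 1) := by
  have hinv : IntervalIntegrable (fun t : ℝ => (2 * t)⁻¹) MeasureTheory.volume ζ (1 / 2) :=
    ((continuous_const.mul continuous_id).continuousOn.inv₀ fun _ ht =>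
      mul_ne_zero two_ne_zero (h0.trans_le (uIcc_of_le h ▸ ht).1).ne').intervalIntegrable
  calc log (ζ⁻¹ / 2) / 2 = ∫ t in ζ..(1 / 2 : ℝ), (2 * t)⁻¹ := by
        simp_rw [mul_inv, integral_const_mul, integral_inv_of_pos h0 one_half_pos]
        field_simp
    _ ≤ ∫ t in ζ..(1 / 2 : ℝ), √(1 / t ^ 2 - 1) :=
        integral_mono_on h hinv (intervalIntegrable_sqrt_one_div_sq_sub_one h0 one_half_pos)
          fun t ht => inv_two_mul_le_sqrt_one_div_sq_sub_one (h0.trans_le ht.1) ht.2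
    _ ≤ ∫ t in ζ..(1 : ℝ), √(1 / t ^ 2 - 1) := by
        rw [← integral_add_adjacent_intervals
          (intervalIntegrable_sqrt_one_div_sq_sub_one h0 one_half_pos)
          (intervalIntegrable_sqrt_one_div_sq_sub_one one_half_pos one_pos)]
        exact le_add_of_nonneg_right (integral_nonneg (by norm_num) fun _ _ => sqrt_nonneg _)

lemma one_sub_sq_rpow_div_two_sub_sq_le_one {ζ : ℝ} (h : ζ ^ 2 ≤ 1) :
    (1 - ζ ^ 2) ^ ((3 : ℝ) / 2) / (2 - ζ ^ 2) ≤ 1 := by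
  rw [div_le_one (by linarith)]
  linarith [rpow_le_one (by linarith : 0 ≤ 1 - ζ ^ 2) (by nlinarith [sq_nonneg ζ])
    (by norm_num : (0 : ℝ) ≤ 3 / 2)]

lemma tendsto_g0_nhdsGT_zero : Tendsto g0 (𝓝[>] 0) atTop := by
  have hlog : Tendsto (fun ζ : ℝ => log (ζ⁻¹ / 2) / 2 - 1) (𝓝[>] 0) atTop :=
    tendsto_atTop_add_const_right _ _
      ((tendsto_log_atTop.comp (tendsto_inv_nhdsGT_zero.atTop_div_const two_pos)).atTop_div_const
        two_pos)
  refine tendsto_atTop_mono' _ ?_ hlog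
  filter_upwards [Ioo_mem_nhdsGT one_half_pos] with ζ hζ
  have hζ2 : ζ ^ 2 ≤ 1 := by nlinarith [hζ.1, hζ.2]
  unfold g0
  linarith [log_div_two_le_integral_sqrt_one_div_sq_sub_one hζ.1 hζ.2.le,
    one_sub_sq_rpow_div_two_sub_sq_le_one hζ2]

/-- `g₀(ζ) → +∞` as `ζ → 0⁺`, `g₀(√(2−√2)) < 0`, hence `g₀` has a unique zero
`ζ₀ ∈ (0, √(2−√2))`; moreover `g₀ < 0` on `(ζ₀, 1)`. -/
theorem stmt9 :
    Tendsto g0 (nhdsWithin 0 (Set.Ioi (0 : ℝ))) atTop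
      ∧ g0 (Real.sqrt (2 - Real.sqrt 2)) < 0
      ∧ ∃ ζ₀ ∈ Set.Ioo (0 : ℝ) (Real.sqrt (2 - Real.sqrt 2)),
          g0 ζ₀ = 0
          ∧ (∀ ζ ∈ Set.Ioo (0 : ℝ) (Real.sqrt (2 - Real.sqrt 2)), g0 ζ = 0 → ζ = ζ₀)
          ∧ ∀ ζ ∈ Set.Ioo ζ₀ (1 : ℝ), g0 ζ < 0 := by
  have hc0 := sqrt_two_sub_sqrt_two_pos
  have hc1 := sqrt_two_sub_sqrt_two_lt_one
  have hgc := g0_sqrt_two_sub_sqrt_two_neg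
  obtain ⟨ε, hgε, hε⟩ : ∃ ε, 0 < g0 ε ∧ ε ∈ Ioo 0 √(2 - √2) :=
    ((tendsto_g0_nhdsGT_zero.eventually_gt_atTop 0).and (Ioo_mem_nhdsGT hc0)).exists
  obtain ⟨ζ₀, hζ₀, hgζ₀⟩ := intermediate_value_Ico' hε.2.le
    (continuousOn_g0.mono (Icc_subset_Ioc hε.1 hc1.le)) ⟨hgc, hgε.le⟩
  have hζ₀pos : 0 < ζ₀ := hε.1.trans_le hζ₀.1
  refine ⟨tendsto_g0_nhdsGT_zero, hgc, ζ₀, ⟨hζ₀pos, hζ₀.2⟩, hgζ₀, fun ζ hζ hgζ => ?_,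
    fun ζ hζ => ?_⟩
  · exact strictAntiOn_g0.injOn ⟨hζ.1, hζ.2.le⟩ ⟨hζ₀pos, hζ₀.2.le⟩ (hgζ.trans hgζ₀.symm)
  · rcases le_or_gt ζ √(2 - √2) with h | h
    · exact hgζ₀ ▸ strictAntiOn_g0 ⟨hζ₀pos, hζ₀.2.le⟩ ⟨hζ₀pos.trans hζ.1, h⟩ hζ.1
    · exact g0_one ▸ strictMonoOn_g0 ⟨h.le, hζ.2.le⟩ ⟨hc1.le, le_rfl⟩ hζ.2
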